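/- The standard product metric on S² × ℝ^{n−2} (round unit sphere times Euclidean space, n ≥ 4) is weakly PIC1; in particular the maximal volume growth assumption cannot be dropped from the statement that complete weakly PIC1 manifolds of maximal volume growth are diffeomorphic to ℝⁿ. -/

import Mathlib

/- ------------------------------------------------------------------------
Common framework.

Mathlib does not yet have Riemannian metrics, curvature tensors, or Ricci
flow.  We therefore set up an abstract framework:

* `AlgCurv n` : algebraic curvature tensors on ℝⁿ (the curvature tensor of a
  Riemannian n-manifold at a point, expressed in an orthonormal frame);
* `CurvForm n` : curvature-type operators viewed as complex bilinear forms on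
  𝔰𝔬(n,ℂ) (realized as complex n×n matrices), together with Hamilton's
  quadratic `Q(R) = R² + R^#`, the cones `𝔠(S)`, and the PIC1 cone;
* `RiemMetric n M` : the data of a Riemannian metric on `M` (distance,
  volume, curvature tensor, curvature operator, scalar curvature, |Rm|,
  injectivity radius).  Completeness is encoded via Hopf–Rinow as
  precompactness of all metric balls;
* `RicciFlow n M` : a family `t ↦ g(t)` of such metrics, representing a
  solution of the Ricci flow equation ∂ₜ g = −2 Ric(g(t)).
------------------------------------------------------------------------ -/

open scoped Manifold RealInnerProductSpace
open Metric Set Matrix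

noncomputable section

/-- Euclidean n-space. -/
abbrev En (n : ℕ) := EuclideanSpace ℝ (Fin n)

/-- An algebraic curvature tensor on ℝⁿ: a quadrilinear map with the
symmetries of the Riemann curvature tensor.  (Linearity in the first slot
together with the symmetries gives full multilinearity.) -/
structure AlgCurv (n : ℕ) where
  A : En n → En n → En n → En n → ℝ
  add_left : ∀ x x' y z w, A (x + x') y z w = A x y z w + A x' y z w
  smul_left : ∀ (c : ℝ) x y z w, A (c • x) y z w = c * A x y z w
  antisymm_fst : ∀ x y z w, A x y z w = - A y x z w
  antisymm_snd : ∀ x y z w, A x y z w = - A x y w z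
  symm_pair : ∀ x y z w, A x y z w = A z w x y
  bianchi : ∀ x y z w, A x y z w + A y z x w + A z x y w = 0

/-- The weakly PIC1 condition for a curvature-type 4-tensor `A` on ℝⁿ:
`A₁₃₁₃ + λ²A₁₄₁₄ + A₂₃₂₃ + λ²A₂₄₂₄ − 2λA₁₂₃₄ ≥ 0` for every orthonormal
4-frame `e₁,e₂,e₃,e₄` and every `λ ∈ [0,1]`. -/
def WeaklyPIC1Fun {n : ℕ} (A : En n → En n → En n → En n → ℝ) : Prop :=
  ∀ e : Fin 4 → En n, Orthonormal ℝ e → ∀ l : ℝ, l ∈ Set.Icc (0:ℝ) 1 →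
    0 ≤ A (e 0) (e 2) (e 0) (e 2) + l ^ 2 * A (e 0) (e 3) (e 0) (e 3)
      + A (e 1) (e 2) (e 1) (e 2) + l ^ 2 * A (e 1) (e 3) (e 1) (e 3)
      - 2 * l * A (e 0) (e 1) (e 2) (e 3)

/-- A curvature operator is weakly PIC1. -/
def AlgCurv.WeaklyPIC1 {n : ℕ} (R : AlgCurv n) : Prop := WeaklyPIC1Fun R.A

/-- Nonnegativity of the Ricci contraction of an algebraic curvature
tensor: `Ric(A)(e,e) = ∑ᵢ A(e,eᵢ,e,eᵢ) ≥ 0` for every unit vector `e` and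
every orthonormal basis `eᵢ`. -/
def AlgCurv.RicNonneg {n : ℕ} (R : AlgCurv n) : Prop :=
  ∀ (b : OrthonormalBasis (Fin n) ℝ (En n)) (x : En n), ‖x‖ = 1 →
    0 ≤ ∑ i, R.A x (b i) x (b i)

/-! ### Curvature operators as bilinear forms on 𝔰𝔬(n,ℂ) -/

/-- Complex n×n matrices; 𝔰𝔬(n,ℂ) is the set of skew-symmetric ones. -/
abbrev CMat (n : ℕ) := Matrix (Fin n) (Fin n) ℂ

/-- Curvature-type operators, viewed (after complex bilinear extension) as
bilinear forms on 𝔰𝔬(n,ℂ); we represent them simply as functions on pairs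
of complex matrices. -/
abbrev CurvForm (n : ℕ) := CMat n → CMat n → ℂ

/-- Entrywise complex conjugation `v ↦ v̄`. -/
def conjMat {n : ℕ} (v : CMat n) : CMat n := v.map (starRingEnd ℂ)

/-- A complex number which is a nonnegative real; used to express
`B(v, v̄) ≥ 0`. -/
def NonnegReal (z : ℂ) : Prop := z.im = 0 ∧ 0 ≤ z.re

/-- The complex bilinear trace form `⟨v,w⟩ = ½ tr(vᵀ w)`, normalized so that
the standard basis `Eᵢⱼ = eᵢeⱼᵀ − eⱼeᵢᵀ` (i<j) of 𝔰𝔬(n) is orthonormal. -/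
def mip {n : ℕ} (v w : CMat n) : ℂ := (1/2 : ℂ) * (vᵀ * w).trace

/-- `𝓘`: the curvature operator of constant sectional curvature 1 (scalar
curvature n(n−1)), i.e. the identity bilinear form on 𝔰𝔬(n). -/
def Iop (n : ℕ) : CurvForm n := fun v w => mip v w

/-- `B + c·𝓘` as a curvature form. -/
def shiftForm {n : ℕ} (B : CurvForm n) (c : ℝ) : CurvForm n :=
  fun v w => B v w + (c : ℂ) * Iop n v w

/-- The standard basis elements `Eᵢⱼ = eᵢeⱼᵀ − eⱼeᵢᵀ` of 𝔰𝔬(n). -/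
def Eb {n : ℕ} (i j : Fin n) : CMat n :=
  Matrix.single i j (1:ℂ) - Matrix.single j i (1:ℂ)

/-- Matrix commutator (Lie bracket of 𝔰𝔬(n,ℂ)). -/
def mbracket {n : ℕ} (v w : CMat n) : CMat n := v * w - w * v

/-- `B²` as a bilinear form: `B²(v,w) = ∑_α B(v,b_α) B(b_α,w)` over an
orthonormal basis `b_α` of 𝔰𝔬(n) (the factor ½ accounts for summing over
all ordered pairs (i,j)). -/
def sqForm {n : ℕ} (B : CurvForm n) : CurvForm n := fun v w =>
  (1/2 : ℂ) * ∑ i, ∑ j, B v (Eb i j) * B (Eb i j) w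

/-- Hamilton's `B^#` as a bilinear form:
`B^#(v,w) = ½ ∑_{α,β,γ,δ} B(b_α,b_γ) B(b_β,b_δ) ⟨[b_α,b_β],v⟩ ⟨[b_γ,b_δ],w⟩`
(the factor 1/32 accounts for summing over all ordered pairs). -/
def sharpForm {n : ℕ} (B : CurvForm n) : CurvForm n := fun v w =>
  (1/32 : ℂ) * ∑ i₁, ∑ j₁, ∑ i₂, ∑ j₂, ∑ i₃, ∑ j₃, ∑ i₄, ∑ j₄,
    B (Eb i₁ j₁) (Eb i₃ j₃) * B (Eb i₂ j₂) (Eb i₄ j₄) *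
      mip (mbracket (Eb i₁ j₁) (Eb i₂ j₂)) v *
        mip (mbracket (Eb i₃ j₃) (Eb i₄ j₄)) w

/-- `Q(B) = B² + B^#`. -/
def Qform {n : ℕ} (B : CurvForm n) : CurvForm n :=
  fun v w => sqForm B v w + sharpForm B v w

/-- The convex cone `𝔠(S) = {Rm : Rm(v,v̄) ≥ 0 for all v ∈ S}`. -/
def coneOf {n : ℕ} (S : Set (CMat n)) : Set (CurvForm n) :=
  {B | ∀ v ∈ S, NonnegReal (B v (conjMat v))}

/-- `S ⊂ 𝔰𝔬(n,ℂ)` invariant under the natural SO(n,ℂ)-action. -/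
def IsAdmissibleSet {n : ℕ} (S : Set (CMat n)) : Prop :=
  (∀ v ∈ S, vᵀ = -v) ∧
    ∀ g : CMat n, gᵀ * g = 1 → g.det = 1 → ∀ v ∈ S, g * v * g⁻¹ ∈ S

/-- The cone condition (2.1): for every `Rm ∈ ∂𝔠(S)` and every null vector
`v ∈ S` (i.e. `Rm(v,v̄)=0`), one has `Q(Rm)(v,v̄) ≥ 0`. -/
def ConeCondition {n : ℕ} (S : Set (CMat n)) : Prop :=
  ∀ B ∈ coneOf S, ∀ v ∈ S, B v (conjMat v) = 0 →
    NonnegReal (Qform B v (conjMat v))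

/-- The set `S = {v ∈ 𝔰𝔬(n,ℂ) : rank v = 2, v³ = 0}` defining the PIC1
cone. -/
def SPIC1 (n : ℕ) : Set (CMat n) :=
  {v | vᵀ = -v ∧ v.rank = 2 ∧ v * v * v = 0}

/-- The PIC1 cone `𝔠_{PIC1} = 𝔠(S_{PIC1})`. -/
def conePIC1 (n : ℕ) : Set (CurvForm n) := coneOf (SPIC1 n)

/-- The Ricci contraction of a curvature form, as a matrix:
`Ric(B)_{pq} = ∑ᵢ B(e_p ∧ eᵢ, e_q ∧ eᵢ)`. -/
def RicMat {n : ℕ} (B : CurvForm n) : CMat n :=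
  Matrix.of fun p q => ∑ i, B (Eb p i) (Eb q i)

/-- Scalar curvature of a curvature form. -/
def scalOf {n : ℕ} (B : CurvForm n) : ℂ := ∑ p, RicMat B p p

/-- The Kulkarni–Nomizu product `h ∧ g` of a symmetric matrix with the
metric, as a bilinear form on 𝔰𝔬(n,ℂ). -/
def knForm {n : ℕ} (h : CMat n) : CurvForm n := fun v w =>
  (1/4 : ℂ) * ∑ i, ∑ j, ∑ k, ∑ l, v i j * w k l *
    (h i k * (if j = l then (1:ℂ) else 0) + h j l * (if i = k then (1:ℂ) else 0)
      - h i l * (if j = k then (1:ℂ) else 0) - h j k * (if i = l then (1:ℂ) else 0))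

/-- Condition (2.4): there is `λ ≥ 0` such that for every `Rm ∈ ∂𝔠(S)` and
every null vector `v ∈ S`, `(Ric ∧ I − ½ scal·𝓘)(v,v̄) ≤ λ √(Q(Rm)(v,v̄))`. -/
def ConeCondition24 {n : ℕ} (S : Set (CMat n)) : Prop :=
  ∃ lam : ℝ, 0 ≤ lam ∧ ∀ B ∈ coneOf S, ∀ v ∈ S, B v (conjMat v) = 0 →
    (knForm (RicMat B) v (conjMat v)
        - (1/2 : ℂ) * scalOf B * Iop n v (conjMat v)).re
      ≤ lam * Real.sqrt ((Qform B v (conjMat v)).re)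

/-! ### Abstract Riemannian metrics and Ricci flows -/

/-- The data of a Riemannian metric `g` on `M`: Riemannian distance,
Riemannian volume, curvature tensor (in orthonormal frames), curvature
operator on 𝔰𝔬(n,ℂ), scalar curvature, norm of curvature `|Rm|` and
injectivity radius.  This is an abstract stand-in for a genuine Riemannian
metric, which is not available in Mathlib. -/
structure RiemMetric (n : ℕ) (M : Type*) where
  d : M → M → ℝ
  vol : Set M → ℝ
  Rm : M → AlgCurv n
  RmOp : M → CurvForm n
  scal : M → ℝ
  normRm : M → ℝ
  inj : M → ℝ

namespace RiemMetric

variable {n : ℕ} {M : Type*}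

/-- The geodesic ball `B_g(p,r)`. -/
def ball (g : RiemMetric n M) (p : M) (r : ℝ) : Set M := {x | g.d p x < r}

/-- Completeness of `g`, encoded via Hopf–Rinow: all balls are
precompact. -/
def Complete [TopologicalSpace M] (g : RiemMetric n M) : Prop :=
  ∀ (p : M) (r : ℝ), IsCompact (closure (g.ball p r))

end RiemMetric

/-- A solution `t ↦ g(t)` of the Ricci flow `∂ₜ g = −2 Ric(g(t))` on `M`,
as abstract data (the evolution equation itself is part of the intended
interpretation of this data). -/
abbrev RicciFlow (n : ℕ) (M : Type*) := ℝ → RiemMetric n M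

/-- `ω_n`: the volume of the unit ball in ℝⁿ. -/
def eucBallVol (n : ℕ) : ℝ :=
  (MeasureTheory.volume (Metric.ball (0 : EuclideanSpace ℝ (Fin n)) 1)).toReal

end

/-- Orthogonal projection of ℝⁿ onto the first two coordinates.  In an
orthonormal frame adapted to the splitting `T(S² × ℝ^{n-2}) = TS² ⊕ ℝ^{n-2}`,
the curvature tensor of the product of the round unit sphere S² with flat
ℝ^{n-2} is
`R(x,y,z,w) = ⟨Px,Pz⟩⟨Py,Pw⟩ − ⟨Px,Pw⟩⟨Py,Pz⟩`,
where `P` is this projection (the S² factor has constant curvature 1 and the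
flat factor contributes nothing). -/
noncomputable def projS2 {n : ℕ} (x : En n) : En n :=
  (EuclideanSpace.equiv (Fin n) ℝ).symm fun i => if (i : ℕ) < 2 then x i else 0

/-! The curvature tensor of `S² × ℝ^{n-2}` is `ω ⊗ ω` for the area form `ω = e¹ ∧ e²` of the
sphere factor (Binet–Cauchy). Since `ω` is decomposable it satisfies the Plücker relation
`ω₁₂ω₃₄ = ω₁₃ω₂₄ − ω₁₄ω₂₃`, which turns the PIC1 expression into the sum of squares
`(ω₁₃ − λω₂₄)² + (ω₂₃ + λω₁₄)²`. -/

def wedgeForm {E : Type*} (α β : E → ℝ) (x y : E) : ℝ := α x * β y - α y * β x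

theorem wedgeForm_plucker {E : Type*} (α β : E → ℝ) (a b c d : E) :
    wedgeForm α β a b * wedgeForm α β c d =
      wedgeForm α β a c * wedgeForm α β b d - wedgeForm α β a d * wedgeForm α β b c := by
  unfold wedgeForm
  ring

theorem weaklyPIC1Fun_of_plucker {n : ℕ} (ω : En n → En n → ℝ)
    (hω : ∀ a b c d, ω a b * ω c d = ω a c * ω b d - ω a d * ω b c) :
    WeaklyPIC1Fun fun x y z w => ω x y * ω z w := by
  intro e _ l _
  have hsos : ω (e 0) (e 2) * ω (e 0) (e 2) + l ^ 2 * (ω (e 0) (e 3) * ω (e 0) (e 3))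
      + ω (e 1) (e 2) * ω (e 1) (e 2) + l ^ 2 * (ω (e 1) (e 3) * ω (e 1) (e 3))
      - 2 * l * (ω (e 0) (e 1) * ω (e 2) (e 3))
      = (ω (e 0) (e 2) - l * ω (e 1) (e 3)) ^ 2 + (ω (e 1) (e 2) + l * ω (e 0) (e 3)) ^ 2 := by
    rw [hω (e 0) (e 1) (e 2) (e 3)]
    ring
  rw [hsos]
  positivity

theorem inner_projS2 {m : ℕ} (x z : En (m + 2)) :
    ⟪projS2 x, projS2 z⟫ = x 0 * z 0 + x 1 * z 1 := by
  simp [PiLp.inner_apply, Fin.sum_univ_succ, projS2, mul_comm]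

/-- The standard product metric on `S² × ℝ^{n−2}` (round
unit sphere times Euclidean space, `n ≥ 4`) is weakly PIC1: its curvature
tensor (expressed pointwise in an adapted orthonormal frame as above) is a
weakly PIC1 algebraic curvature operator.  (In particular, the maximal
volume growth assumption cannot be dropped from Theorem 1.2.) -/
theorem sphere_times_euclidean_weaklyPIC1 (n : ℕ) (hn : 4 ≤ n) :
    WeaklyPIC1Fun (n := n) (fun x y z w =>
      ⟪projS2 x, projS2 z⟫ * ⟪projS2 y, projS2 w⟫
        - ⟪projS2 x, projS2 w⟫ * ⟪projS2 y, projS2 z⟫) := by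
  obtain ⟨m, rfl⟩ : ∃ m, n = m + 2 := ⟨n - 2, by omega⟩
  have hcurv : (fun x y z w : En (m + 2) =>
      ⟪projS2 x, projS2 z⟫ * ⟪projS2 y, projS2 w⟫
        - ⟪projS2 x, projS2 w⟫ * ⟪projS2 y, projS2 z⟫) =
      fun x y z w => wedgeForm (· 0) (· 1) x y * wedgeForm (· 0) (· 1) z w := by
    funext x y z w
    simp only [inner_projS2, wedgeForm]
    ring
  rw [hcurv]
  exact weaklyPIC1Fun_of_plucker _ (wedgeForm_plucker _ _)
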